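/- arXiv:2208.12096 — 2 statements merged into one kernel-verified Lean document; each statement's English description precedes it below -/
import Mathlib

section
/- In every stochastic game, for every ε > 0, every player i ∈ I has a subgame ε-maxmin strategy; that is, a strategy σ*_i such that for every history h ∈ H and every strategy profile σ_{-i} of the opponents, E_{h,σ*_i,σ_{-i}}[f_i] ≥ v_i(h) − ε. -/
open scoped ENNReal NNReal Classical

/-- A multiplayer stochastic game: a nonempty finite set of players `I`, a nonempty
countable set of states `S`, nonempty finite action sets `A i`, a transition function
`trans` and bounded Borel payoff functions `payoff i` on runs. -/
structure StochGame where
  I : Type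
  S : Type
  A : I → Type
  [fintypeI : Fintype I]
  [nonemptyI : Nonempty I]
  [countableS : Countable S]
  [nonemptyS : Nonempty S]
  [fintypeA : ∀ i, Fintype (A i)]
  [nonemptyA : ∀ i, Nonempty (A i)]
  trans : S → (∀ i, A i) → PMF S
  payoff : I → S × (ℕ → (∀ i, A i) × S) → ℝ

open MeasureTheory

attribute [instance] StochGame.fintypeI StochGame.nonemptyI StochGame.countableS
  StochGame.nonemptyS StochGame.fintypeA StochGame.nonemptyA

namespace StochGame

variable (G : StochGame)

noncomputable instance : DecidableEq G.I := Classical.decEq _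

noncomputable instance (i : G.I) : DecidableEq (G.A i) := Classical.decEq _

/-- Action profiles. -/
abbrev ActionProfile := ∀ i, G.A i

/-- Runs `(s¹,a¹,s²,a²,…)`, encoded as an initial state together with a sequence of
(action profile, next state) pairs. -/
abbrev Run := G.S × (ℕ → G.ActionProfile × G.S)

/-- Histories `(s¹,a¹,…,s^n)`, encoded as an initial state together with a finite list of
(action profile, next state) pairs. -/
abbrev History := G.S × List (G.ActionProfile × G.S)

instance : MeasurableSpace G.S := ⊤
instance : MeasurableSpace G.ActionProfile := ⊤

variable {G}

/-- The final state `s_h` of a history. -/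
def lastState (h : G.History) : G.S := h.2.getLast?.elim h.1 Prod.snd

/-- The stage (length) of a history: a history `(s¹,a¹,…,s^n)` is in stage `n`. -/
def stage (h : G.History) : ℕ := h.2.length + 1

/-- The history obtained by appending one action profile and one state. -/
def snocH (h : G.History) (a : G.ActionProfile) (s : G.S) : G.History :=
  (h.1, h.2 ++ [(a, s)])

/-- The history obtained by appending a finite list of (action profile, state) pairs. -/
def catH (h : G.History) (l : List (G.ActionProfile × G.S)) : G.History := (h.1, h.2 ++ l)

/-- The history in stage 1 consisting of the initial state `s` only. -/
def initH (G : StochGame) (s : G.S) : G.History := (s, [])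

/-- All transitions along the list have positive probability when starting from `s`. -/
def ValidFrom (G : StochGame) : G.S → List (G.ActionProfile × G.S) → Prop
  | _, [] => True
  | s, (a, t) :: l => G.trans s a t ≠ 0 ∧ ValidFrom G t l

/-- A history belongs to the set `H` of histories of the game iff all its transitions have
positive probability. -/
def Valid (h : G.History) : Prop := ValidFrom G h.1 h.2

/-- `Ext h h'` means that the history `h'` extends the history `h` (possibly `h = h'`),
written `h ⪯ h'` in the paper. -/
def Ext (h h' : G.History) : Prop := h.1 = h'.1 ∧ h.2 <+: h'.2

/-- A behavior strategy of player `i`: a mixed action at every history. -/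
abbrev Strategy (G : StochGame) (i : G.I) := G.History → PMF (G.A i)

/-- A strategy profile: one behavior strategy for each player. -/
abbrev Profile (G : StochGame) := ∀ i, G.Strategy i

/-- The probability, under the strategy profile `σ`, that after the history `h` play continues
exactly along the finite continuation `l`. -/
noncomputable def contProb (σ : G.Profile) : G.History → List (G.ActionProfile × G.S) → ℝ≥0∞
  | _, [] => 1
  | h, (a, s) :: l =>
      (∏ i, σ i h (a i)) * G.trans (lastState h) a s * contProb σ (snocH h a s) l

/-- The cylinder set `C(h)` of all runs extending the history `h`. -/
def cyl (h : G.History) : Set G.Run :=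
  {r | r.1 = h.1 ∧ ∀ k, (hk : k < h.2.length) → r.2 k = h.2.get ⟨k, hk⟩}

/-- `P` is the family of probability measures `P_{h,σ}` on runs induced, via the
Ionescu-Tulcea/Kolmogorov extension, by a history `h` and a strategy profile `σ`:
each `P h σ` is a probability measure, and the measure of the cylinder set of any finite
extension of `h` is the product of the transition probabilities prescribed by `σ` and `p`.
(These properties determine `P h σ` uniquely, since `P h σ (cyl h) = 1`.) -/
def IsInducedFamily (G : StochGame) (P : G.History → G.Profile → Measure G.Run) : Prop :=
  (∀ h σ, IsProbabilityMeasure (P h σ)) ∧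
    ∀ (h : G.History) (σ : G.Profile) (l : List (G.ActionProfile × G.S)),
      P h σ (cyl (catH h l)) = contProb σ h l

/-- The expected payoff `E_{h,σ}[f_i]` of player `i` in the subgame at `h` under `σ`. -/
noncomputable def expPay (P : G.History → G.Profile → Measure G.Run) (h : G.History)
    (σ : G.Profile) (i : G.I) : ℝ :=
  ∫ r, G.payoff i r ∂(P h σ)

/-- The minmax value `v̄_i(h)` of player `i` at the history `h`. -/
noncomputable def minmaxVal (P : G.History → G.Profile → Measure G.Run) (i : G.I)
    (h : G.History) : ℝ :=
  ⨅ σ : G.Profile, ⨆ τ : G.Strategy i, expPay P h (Function.update σ i τ) i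

/-- The maxmin value `v̲_i(h)` of player `i` at the history `h`. -/
noncomputable def maxminVal (P : G.History → G.Profile → Measure G.Run) (i : G.I)
    (h : G.History) : ℝ :=
  ⨆ τ : G.Strategy i, ⨅ σ : G.Profile, expPay P h (Function.update σ i τ) i

/-- `E[D | h, x]`: the expected value of `D` at the next history, when at history `h` the
players use the mixed action profile `x` and the next state is drawn according to `p`. -/
noncomputable def oneShotExp (D : G.History → ℝ) (h : G.History) (x : ∀ i, PMF (G.A i)) : ℝ :=
  ∑ a : G.ActionProfile, (∏ i, (x i (a i)).toReal) *
    ∑' s : G.S, (G.trans (lastState h) a s).toReal * D (snocH h a s)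

/-- The minmax value `v̄_{O,i}(D,h)` of player `i` in the one-shot game `G_O(D,h)`. -/
noncomputable def oneShotMinmax (D : G.History → ℝ) (i : G.I) (h : G.History) : ℝ :=
  ⨅ x : ∀ j, PMF (G.A j), ⨆ y : PMF (G.A i), oneShotExp D h (Function.update x i y)

/-- The maxmin value `v̲_{O,i}(D,h)` of player `i` in the one-shot game `G_O(D,h)`. -/
noncomputable def oneShotMaxmin (D : G.History → ℝ) (i : G.I) (h : G.History) : ℝ :=
  ⨆ y : PMF (G.A i), ⨅ x : ∀ j, PMF (G.A j), oneShotExp D h (Function.update x i y)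

end StochGame

/-!
Fix for every history `g` a strategy `τ g` that is `ε/2`-maxmin in the subgame at `g`. Player `i`
follows `τ g` from the last reset point `g` on, and resets at the current history `h` as soon as
`τ g` guarantees less than `v(h) - ε` there; so the strategy being followed always guarantees at
least `v(h) - ε` at the current history `h`. Let `β` be the infimum over reset points `g` of what
the switching strategy guarantees at `g`, minus `v(g)`. Splitting the play after `h` at the next
reset points, where the opponents can push the switching strategy down only to `v + β` but the
followed strategy to below `v - ε`, shows that the switching strategy guarantees at `h` what the
followed strategy does, up to `min 0 (β + ε)`. At reset points this gives
`β ≥ -ε/2 + min 0 (β + ε)`, hence `β + ε ≥ 0`, and the switching strategy is subgame `ε`-maxmin.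
-/

lemma MeasureTheory.measure_inter_compl_iUnion {α ι : Type*} [MeasurableSpace α] [Countable ι]
    (μ : Measure α) [IsFiniteMeasure μ] {s : Set α} (hs : MeasurableSet s) {t : ι → Set α}
    (ht : ∀ i, MeasurableSet (t i)) (hd : Pairwise (Function.onFun Disjoint t)) :
    μ (s ∩ (⋃ i, t i)ᶜ) = μ s - ∑' i, μ (s ∩ t i) := by
  rw [← Set.sdiff_eq, ← measure_iUnion (f := fun i => s ∩ t i)
    (fun i j hij => (hd hij).mono Set.inter_subset_right Set.inter_subset_right)
    fun i => hs.inter (ht i), ← Set.inter_iUnion]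
  exact ENNReal.eq_sub_of_add_eq (measure_ne_top _ _)
    (by rw [add_comm, measure_inter_add_sdiff s (.iUnion ht)])

namespace StochGame

section

variable {G : StochGame} {P : G.History → G.Profile → Measure G.Run} {i : G.I} {C : ℝ}

lemma ext_refl (h : G.History) : Ext h h := ⟨rfl, List.prefix_refl _⟩

lemma Ext.trans {h₁ h₂ h₃ : G.History} (h12 : Ext h₁ h₂) (h23 : Ext h₂ h₃) : Ext h₁ h₃ :=
  ⟨h12.1.trans h23.1, h12.2.trans h23.2⟩

lemma Ext.antisymm {a b : G.History} (hab : Ext a b) (hba : Ext b a) : a = b :=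
  Prod.ext hab.1 (hab.2.eq_of_length (le_antisymm hab.2.length_le hba.2.length_le))

lemma ext_catH (h : G.History) (l : List (G.ActionProfile × G.S)) : Ext h (catH h l) :=
  ⟨rfl, l, rfl⟩

lemma ext_iff_exists_catH {h h' : G.History} : Ext h h' ↔ ∃ l, h' = catH h l := by
  refine ⟨fun ⟨h1, l, hl⟩ => ⟨l, Prod.ext h1.symm hl.symm⟩, ?_⟩
  rintro ⟨l, rfl⟩
  exact ext_catH h l

lemma ext_catH_catH (h : G.History) {l l' : List (G.ActionProfile × G.S)} (hl : l' <+: l) :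
    Ext (catH h l') (catH h l) := by
  obtain ⟨t, rfl⟩ := hl
  exact ⟨rfl, t, by simp [catH]⟩

lemma ext_snocH (h : G.History) (a : G.ActionProfile) (s : G.S) : Ext h (snocH h a s) :=
  ext_catH h [(a, s)]

lemma Ext.length_le {h h' : G.History} (hext : Ext h h') : h.2.length ≤ h'.2.length :=
  hext.2.length_le

lemma ext_or_ext_of_ext {a b c : G.History} (hac : Ext a c) (hbc : Ext b c) :
    Ext a b ∨ Ext b a :=
  (List.prefix_or_prefix_of_prefix hac.2 hbc.2).imp (fun h => ⟨hac.1.trans hbc.1.symm, h⟩)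
    (fun h => ⟨hbc.1.trans hac.1.symm, h⟩)

lemma History.snoc_induction {motive : G.History → Prop} (init : ∀ s, motive (initH G s))
    (snoc : ∀ h a s, motive h → motive (snocH h a s)) (h : G.History) : motive h := by
  obtain ⟨s, l⟩ := h
  induction l using List.reverseRecOn with
  | nil => exact init s
  | append_singleton l e ih => exact snoc (s, l) e.1 e.2 ih

lemma Ext.length_lt {h h' : G.History} (hext : Ext h h') (hne : h ≠ h') :
    h.2.length < h'.2.length :=
  hext.length_le.lt_of_ne fun hlen => hne (Prod.ext hext.1 (hext.2.eq_of_length hlen))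

lemma snocH_ne (h : G.History) (a : G.ActionProfile) (s : G.S) : snocH h a s ≠ h :=
  fun heq => by simpa [snocH] using congrArg (fun g : G.History => g.2.length) heq

@[simp] lemma catH_nil (h : G.History) : catH h [] = h := by simp [catH]

lemma catH_cons (h : G.History) (a : G.ActionProfile) (s : G.S)
    (l : List (G.ActionProfile × G.S)) : catH h ((a, s) :: l) = catH (snocH h a s) l := by
  simp [catH, snocH]

lemma catH_catH (h : G.History) (l₁ l₂ : List (G.ActionProfile × G.S)) :
    catH (catH h l₁) l₂ = catH h (l₁ ++ l₂) := by
  simp [catH]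

lemma catH_append_singleton (h : G.History) (l : List (G.ActionProfile × G.S))
    (a : G.ActionProfile) (s : G.S) : catH h (l ++ [(a, s)]) = snocH (catH h l) a s := by
  simp [catH, snocH]

lemma contProb_append (σ : G.Profile) (h : G.History) (l₁ l₂ : List (G.ActionProfile × G.S)) :
    contProb σ h (l₁ ++ l₂) = contProb σ h l₁ * contProb σ (catH h l₁) l₂ := by
  induction l₁ generalizing h with
  | nil => simp [contProb]
  | cons e l₁ ih =>
    obtain ⟨a, s⟩ := e
    simp only [List.cons_append, contProb, catH_cons, ih, mul_assoc]

lemma contProb_congr {σ₁ σ₂ : G.Profile} {h : G.History} {l : List (G.ActionProfile × G.S)}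
    (hag : ∀ j l', l' <+: l → l' ≠ l → σ₁ j (catH h l') = σ₂ j (catH h l')) :
    contProb σ₁ h l = contProb σ₂ h l := by
  induction l generalizing h with
  | nil => rfl
  | cons e l ih =>
    obtain ⟨a, s⟩ := e
    have hrest : contProb σ₁ (snocH h a s) l = contProb σ₂ (snocH h a s) l := by
      refine ih fun j l' hl' hne => ?_
      simpa [catH_cons] using
        hag j ((a, s) :: l') (List.cons_prefix_cons.mpr ⟨rfl, hl'⟩) (by simpa using hne)
    have hhead : ∀ j, σ₁ j h = σ₂ j h := fun j => by
      simpa using hag j [] List.nil_prefix (List.cons_ne_nil _ _).symm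
    simp only [contProb, hrest, hhead]

lemma cyl_subset_cyl {h h' : G.History} (hext : Ext h h') : cyl h' ⊆ cyl h := by
  obtain ⟨l, rfl⟩ := ext_iff_exists_catH.mp hext
  rintro r ⟨hr₁, hr₂⟩
  refine ⟨hr₁, fun k hk => ?_⟩
  simpa [catH, List.getElem_append_left hk] using
    hr₂ k (by simp only [catH, List.length_append]; omega)

lemma ext_of_mem_cyl_of_length_le {g₁ g₂ : G.History} {r : G.Run} (hr₁ : r ∈ cyl g₁)
    (hr₂ : r ∈ cyl g₂) (hlen : g₁.2.length ≤ g₂.2.length) : Ext g₁ g₂ := by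
  refine ⟨hr₁.1.symm.trans hr₂.1, List.prefix_iff_eq_take.mpr (List.ext_getElem (by simpa) ?_)⟩
  intro k hk₁ _
  have e₁ := hr₁.2 k hk₁
  have e₂ := hr₂.2 k (hk₁.trans_le hlen)
  simp only [List.get_eq_getElem] at e₁ e₂
  simp only [List.getElem_take, ← e₁, e₂]

lemma ext_or_ext_of_mem_cyl {g₁ g₂ : G.History} {r : G.Run} (hr₁ : r ∈ cyl g₁)
    (hr₂ : r ∈ cyl g₂) : Ext g₁ g₂ ∨ Ext g₂ g₁ :=
  (le_total g₁.2.length g₂.2.length).imp (ext_of_mem_cyl_of_length_le hr₁ hr₂)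
    (ext_of_mem_cyl_of_length_le hr₂ hr₁)

lemma disjoint_cyl {g₁ g₂ : G.History} (h₁₂ : ¬Ext g₁ g₂) (h₂₁ : ¬Ext g₂ g₁) :
    Disjoint (cyl g₁) (cyl g₂) :=
  Set.disjoint_left.mpr fun _ hr₁ hr₂ => (ext_or_ext_of_mem_cyl hr₁ hr₂).elim h₁₂ h₂₁

lemma cyl_inter_cyl_of_ext {g₁ g₂ : G.History} (hext : Ext g₁ g₂) :
    cyl g₁ ∩ cyl g₂ = cyl g₂ :=
  Set.inter_eq_self_of_subset_right (cyl_subset_cyl hext)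

lemma measurableSet_cyl (h : G.History) : MeasurableSet (cyl h) := by
  have : cyl h = Prod.fst ⁻¹' {h.1} ∩
      ⋂ k : Fin h.2.length, (fun r : G.Run => r.2 k) ⁻¹' {h.2.get k} := by
    ext r
    simp only [cyl, Set.mem_ofPred_eq, Set.mem_inter_iff, Set.mem_preimage,
      Set.mem_singleton_iff, Set.mem_iInter]
    exact and_congr Iff.rfl ⟨fun H k => H k.1 k.2, fun H k hk => H ⟨k, hk⟩⟩
  rw [this]
  exact (measurable_fst (.of_discrete)).inter
    (.iInter fun k => (measurable_pi_apply _).comp measurable_snd (.of_discrete))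

lemma setOf_run_coord_eq (n : ℕ) (e : G.ActionProfile × G.S) :
    {r : G.Run | r.2 n = e} =
      ⋃ (s : G.S) (l : {l : List (G.ActionProfile × G.S) // l.length = n}),
        cyl (s, l.1 ++ [e]) := by
  ext r
  simp only [Set.mem_ofPred_eq, Set.mem_iUnion]
  constructor
  · intro hr
    refine ⟨r.1, ⟨List.ofFn fun k : Fin n => r.2 k, List.length_ofFn⟩, rfl, fun k hk => ?_⟩
    simp only [List.length_append, List.length_ofFn, List.length_singleton] at hk
    rcases (Nat.lt_succ_iff_lt_or_eq.mp hk) with hkn | rfl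
    · simp [List.getElem_append_left (List.length_ofFn (f := fun k : Fin n => r.2 k) ▸ hkn)]
    · simpa using hr
  · rintro ⟨s, ⟨l, rfl⟩, -, hr⟩
    simpa using hr l.length (by simp)

lemma measurableSpace_run_eq_generateFrom_cyl :
    (inferInstance : MeasurableSpace G.Run) = MeasurableSpace.generateFrom (Set.range cyl) := by
  set m := MeasurableSpace.generateFrom (Set.range (cyl (G := G)))
  have hcyl (h : G.History) : MeasurableSet[m] (cyl h) :=
    MeasurableSpace.measurableSet_generateFrom ⟨h, rfl⟩
  have hfst : Measurable[m] (Prod.fst : G.Run → G.S) := measurable_to_countable' fun s => by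
    convert hcyl (s, [])
    ext r
    simp [cyl]
  have hcoord (n : ℕ) : Measurable[m] (fun r : G.Run => r.2 n) :=
    measurable_to_countable' fun e => by
      change MeasurableSet[m] {r : G.Run | r.2 n = e}
      rw [setOf_run_coord_eq]
      exact .iUnion fun s => .iUnion fun l => hcyl _
  refine le_antisymm ?_ (MeasurableSpace.generateFrom_le ?_)
  · have hid : @Measurable G.Run G.Run m Prod.instMeasurableSpace id :=
      hfst.prodMk (measurable_pi_lambda _ hcoord)
    exact fun s hs => hid hs
  · rintro _ ⟨h, rfl⟩
    exact measurableSet_cyl h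

lemma isPiSystem_range_cyl : IsPiSystem (Set.range (cyl (G := G))) := by
  rintro _ ⟨g₁, rfl⟩ _ ⟨g₂, rfl⟩ ⟨r, hr₁, hr₂⟩
  rcases ext_or_ext_of_mem_cyl hr₁ hr₂ with hext | hext
  · exact ⟨g₂, (cyl_inter_cyl_of_ext hext).symm⟩
  · exact ⟨g₁, by rw [Set.inter_comm, cyl_inter_cyl_of_ext hext]⟩

lemma measure_ext_of_cyl {μ ν : Measure G.Run} [IsFiniteMeasure μ]
    (hcyl : ∀ h, μ (cyl h) = ν (cyl h)) (huniv : μ Set.univ = ν Set.univ) : μ = ν :=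
  ext_of_generate_finite _ measurableSpace_run_eq_generateFrom_cyl isPiSystem_range_cyl
    (by rintro _ ⟨h, rfl⟩; exact hcyl h) huniv

lemma pairwise_disjoint_cyl_of_isAntichain {R : Set G.History} (hR : IsAntichain Ext R) :
    Pairwise (Function.onFun Disjoint fun h' : R => cyl h'.1) := fun a b hab =>
  disjoint_cyl (hR a.2 b.2 (Subtype.coe_ne_coe.mpr hab))
    (hR b.2 a.2 (Subtype.coe_ne_coe.mpr hab.symm))

lemma integrable_payoff (hfm : Measurable (G.payoff i)) (hC : ∀ r, |G.payoff i r| ≤ C)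
    (μ : Measure G.Run) [IsFiniteMeasure μ] : Integrable (G.payoff i) μ :=
  (integrable_const C).mono' hfm.aestronglyMeasurable (.of_forall hC)

namespace IsInducedFamily

variable (hP : IsInducedFamily G P)
include hP

lemma measure_cyl_self (h : G.History) (σ : G.Profile) : P h σ (cyl h) = 1 := by
  simpa [contProb] using hP.2 h σ []

lemma measure_cyl_of_ext {g h : G.History} (hext : Ext g h) (σ : G.Profile) :
    P h σ (cyl g) = 1 := by
  have := hP.1 h σ
  exact le_antisymm prob_le_one
    (hP.measure_cyl_self h σ ▸ measure_mono (cyl_subset_cyl hext))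

lemma measure_cyl_of_not_ext {g h : G.History} (hhg : ¬Ext h g) (hgh : ¬Ext g h)
    (σ : G.Profile) : P h σ (cyl g) = 0 := by
  have := hP.1 h σ
  refine measure_mono_null (disjoint_cyl hgh hhg).subset_compl_right ?_
  exact prob_compl_eq_zero_iff (measurableSet_cyl h) |>.mpr (hP.measure_cyl_self h σ)

lemma measure_cyl_congr {h g : G.History} {π₁ π₂ : G.Profile}
    (hag : ∀ j h'', Ext h h'' → Ext h'' g → h'' ≠ g → π₁ j h'' = π₂ j h'') :
    P h π₁ (cyl g) = P h π₂ (cyl g) := by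
  by_cases hhg : Ext h g
  · obtain ⟨l, rfl⟩ := ext_iff_exists_catH.mp hhg
    rw [hP.2, hP.2]
    exact contProb_congr fun j l' hl' hne => hag j _ (ext_catH h l') (ext_catH_catH h hl')
      fun heq => hne (List.append_cancel_left (congrArg Prod.snd heq))
  by_cases hgh : Ext g h
  · rw [hP.measure_cyl_of_ext hgh, hP.measure_cyl_of_ext hgh]
  · rw [hP.measure_cyl_of_not_ext hhg hgh, hP.measure_cyl_of_not_ext hhg hgh]

lemma measure_congr {h : G.History} {π₁ π₂ : G.Profile}
    (hag : ∀ j h'', Ext h h'' → π₁ j h'' = π₂ j h'') : P h π₁ = P h π₂ := by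
  have := hP.1 h π₁
  have := hP.1 h π₂
  exact measure_ext_of_cyl (fun g => hP.measure_cyl_congr fun j h'' hh'' _ _ => hag j h'' hh'')
    (by simp)

lemma restrict_cyl {h g : G.History} (hext : Ext h g) (σ : G.Profile) :
    (P h σ).restrict (cyl g) = P h σ (cyl g) • P g σ := by
  have := hP.1 h σ
  have := hP.1 g σ
  obtain ⟨l, rfl⟩ := ext_iff_exists_catH.mp hext
  refine measure_ext_of_cyl (fun g' => ?_) (by simp)
  rw [Measure.restrict_apply (measurableSet_cyl g'), Measure.smul_apply, smul_eq_mul]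
  by_cases hg' : Ext (catH h l) g'
  · obtain ⟨t, rfl⟩ := ext_iff_exists_catH.mp hg'
    rw [Set.inter_comm, cyl_inter_cyl_of_ext hg', hP.2, hP.2, catH_catH, hP.2, contProb_append]
  by_cases hg'' : Ext g' (catH h l)
  · rw [cyl_inter_cyl_of_ext hg'', hP.measure_cyl_of_ext hg'', mul_one]
  · rw [(disjoint_cyl hg'' hg').inter_eq, measure_empty, hP.measure_cyl_of_not_ext hg' hg'',
      mul_zero]

section Antichain

variable {h : G.History} {R : Set G.History} (hR : IsAntichain Ext R)

include hR in
lemma hasSum_measureReal_cyl_mul_expPay (hfm : Measurable (G.payoff i))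
    (hC : ∀ r, |G.payoff i r| ≤ C) (hRext : ∀ h' ∈ R, Ext h h') (σ : G.Profile) :
    HasSum (fun h' : R => (P h σ).real (cyl h'.1) * expPay P h'.1 σ i)
      (∫ r in ⋃ h' : R, cyl h'.1, G.payoff i r ∂P h σ) := by
  have := hP.1 h σ
  have hpiece (h' : R) : ∫ r in cyl h'.1, G.payoff i r ∂P h σ =
      (P h σ).real (cyl h'.1) * expPay P h'.1 σ i := by
    rw [hP.restrict_cyl (hRext h'.1 h'.2), integral_smul_measure, smul_eq_mul, measureReal_def,
      expPay]
  simpa only [hpiece] using hasSum_integral_iUnion (fun h' : R => measurableSet_cyl h'.1)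
    (pairwise_disjoint_cyl_of_isAntichain hR) (integrable_payoff hfm hC (P h σ)).integrableOn

variable {π₁ π₂ : G.Profile}
  (hag : ∀ j h'', Ext h h'' → (∀ h' ∈ R, ¬Ext h' h'') → π₁ j h'' = π₂ j h'')
include hag

lemma measure_cyl_congr_of_not_ext {g : G.History} (hg : ∀ h' ∈ R, ¬Ext h' g) :
    P h π₁ (cyl g) = P h π₂ (cyl g) :=
  hP.measure_cyl_congr fun j h'' hh'' hh''g _ =>
    hag j h'' hh'' fun h' hh' hh'h'' => hg h' hh' (hh'h''.trans hh''g)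

include hR

lemma measure_cyl_congr_of_mem {g : G.History} (hg : g ∈ R) :
    P h π₁ (cyl g) = P h π₂ (cyl g) :=
  hP.measure_cyl_congr fun j h'' hh'' hh''g hne => hag j h'' hh'' fun _ hh' hh'h'' =>
    hne (hh''g.antisymm (hR.eq hh' hg (hh'h''.trans hh''g) ▸ hh'h''))

lemma restrict_compl_iUnion_cyl_congr :
    (P h π₁).restrict (⋃ h' : R, cyl h'.1)ᶜ = (P h π₂).restrict (⋃ h' : R, cyl h'.1)ᶜ := by
  have := hP.1 h π₁
  have := hP.1 h π₂
  have hd := pairwise_disjoint_cyl_of_isAntichain hR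
  have hmeas (h' : R) := measurableSet_cyl h'.1
  refine measure_ext_of_cyl (fun g => ?_) ?_
  · rw [Measure.restrict_apply (measurableSet_cyl g), Measure.restrict_apply (measurableSet_cyl g)]
    by_cases hbelow : ∃ h' ∈ R, Ext h' g
    · obtain ⟨h', hh', hh'g⟩ := hbelow
      have hempty : cyl g ∩ (⋃ h' : R, cyl h'.1)ᶜ = ∅ := Set.disjoint_iff_inter_eq_empty.mp <|
        Set.disjoint_compl_right_iff_subset.mpr <|
          (cyl_subset_cyl hh'g).trans (Set.subset_iUnion (fun h' : R => cyl h'.1) ⟨h', hh'⟩)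
      rw [hempty, measure_empty, measure_empty]
    push Not at hbelow
    rw [measure_inter_compl_iUnion _ (measurableSet_cyl g) hmeas hd,
      measure_inter_compl_iUnion _ (measurableSet_cyl g) hmeas hd,
      hP.measure_cyl_congr_of_not_ext hag hbelow]
    congr 1
    refine tsum_congr fun h' => ?_
    by_cases hgh' : Ext g h'.1
    · rw [cyl_inter_cyl_of_ext hgh', hP.measure_cyl_congr_of_mem hR hag h'.2]
    · rw [(disjoint_cyl hgh' (hbelow h'.1 h'.2)).inter_eq, measure_empty, measure_empty]
  · simp only [Measure.restrict_apply_univ]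
    rw [← Set.univ_inter (⋃ h' : R, cyl h'.1)ᶜ,
      measure_inter_compl_iUnion _ .univ hmeas hd, measure_inter_compl_iUnion _ .univ hmeas hd]
    simp only [measure_univ, Set.univ_inter]
    exact congrArg _ (tsum_congr fun h' => hP.measure_cyl_congr_of_mem hR hag h'.2)

/-- The subgames rooted in `R` have total probability at most one, whence `min 0 c`. -/
lemma expPay_add_min_le (hfm : Measurable (G.payoff i)) (hC : ∀ r, |G.payoff i r| ≤ C)
    (hRext : ∀ h' ∈ R, Ext h h') {c : ℝ} (hc : ∀ h' ∈ R, expPay P h' π₂ i + c ≤ expPay P h' π₁ i) :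
    expPay P h π₂ i + min 0 c ≤ expPay P h π₁ i := by
  have := hP.1 h π₁
  have := hP.1 h π₂
  set U := ⋃ h' : R, cyl h'.1
  have hU : MeasurableSet U := .iUnion fun h' => measurableSet_cyl h'.1
  have hsplit (σ : G.Profile) [IsFiniteMeasure (P h σ)] :
      expPay P h σ i = ∫ r in U, G.payoff i r ∂P h σ + ∫ r in Uᶜ, G.payoff i r ∂P h σ :=
    (integral_add_compl hU (integrable_payoff hfm hC _)).symm
  have hout : ∫ r in Uᶜ, G.payoff i r ∂P h π₁ = ∫ r in Uᶜ, G.payoff i r ∂P h π₂ := by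
    rw [hP.restrict_compl_iUnion_cyl_congr hR hag]
  have hw (h' : R) : (P h π₂).real (cyl h'.1) = (P h π₁).real (cyl h'.1) := by
    rw [measureReal_def, measureReal_def, hP.measure_cyl_congr_of_mem hR hag h'.2]
  have hgain : HasSum (fun h' : R =>
      (P h π₁).real (cyl h'.1) * (expPay P h'.1 π₁ i - expPay P h'.1 π₂ i))
      (expPay P h π₁ i - expPay P h π₂ i) := by
    have := (hP.hasSum_measureReal_cyl_mul_expPay hR hfm hC hRext π₁).sub
      (hP.hasSum_measureReal_cyl_mul_expPay hR hfm hC hRext π₂)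
    simp only [hw, ← mul_sub] at this
    rwa [hsplit π₁, hsplit π₂, hout, add_sub_add_right_eq_sub]
  have hmass : HasSum (fun h' : R => (P h π₁).real (cyl h'.1) * c) ((P h π₁).real U * c) := by
    refine HasSum.mul_right c ?_
    simpa only [setIntegral_const, smul_eq_mul, mul_one] using
      hasSum_integral_iUnion (f := fun _ => (1 : ℝ)) (μ := P h π₁)
        (fun h' : R => measurableSet_cyl h'.1) (pairwise_disjoint_cyl_of_isAntichain hR)
      (integrableOn_const (measure_ne_top _ _))
  have hle := hasSum_le (fun h' => mul_le_mul_of_nonneg_left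
    (by linarith [hc h'.1 h'.2]) measureReal_nonneg) hmass hgain
  have hmin : min 0 c ≤ (P h π₁).real U * c := by
    rcases le_total 0 c with hc₀ | hc₀
    · exact (min_le_left _ _).trans (mul_nonneg measureReal_nonneg hc₀)
    · have hU₁ : (P h π₁).real U ≤ 1 := measureReal_le_one
      exact (min_le_right _ _).trans (by nlinarith [measureReal_nonneg (μ := P h π₁) (s := U)])
  linarith

end Antichain

end IsInducedFamily

/-- `maxminVal P i h` is `⨆ τ, guarantee P i τ h` by definition. -/
noncomputable def guarantee (P : G.History → G.Profile → Measure G.Run) (i : G.I)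
    (τ : G.Strategy i) (h : G.History) : ℝ :=
  ⨅ σ : G.Profile, expPay P h (Function.update σ i τ) i

lemma le_guarantee {τ : G.Strategy i} {h : G.History} {a : ℝ}
    (ha : ∀ σ : G.Profile, a ≤ expPay P h (Function.update σ i τ) i) : a ≤ guarantee P i τ h :=
  le_ciInf ha

lemma exists_expPay_lt_of_guarantee_lt {τ : G.Strategy i} {h : G.History} {a : ℝ}
    (ha : guarantee P i τ h < a) : ∃ σ : G.Profile, expPay P h (Function.update σ i τ) i < a :=
  exists_lt_of_ciInf_lt ha

lemma exists_guarantee_gt (h : G.History) {δ : ℝ} (hδ : 0 < δ) :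
    ∃ τ : G.Strategy i, maxminVal P i h - δ < guarantee P i τ h :=
  exists_lt_of_lt_ciSup (sub_lt_self _ hδ)

section Bounded

variable (hP : IsInducedFamily G P) (hC : ∀ r, |G.payoff i r| ≤ C)
include hP hC

lemma abs_expPay_le (h : G.History) (σ : G.Profile) : |expPay P h σ i| ≤ C := by
  have := hP.1 h σ
  simpa [expPay] using norm_integral_le_of_norm_le_const (μ := P h σ)
    (.of_forall fun r => (Real.norm_eq_abs _).trans_le (hC r))

lemma guarantee_le_expPay (τ : G.Strategy i) (h : G.History) (σ : G.Profile) :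
    guarantee P i τ h ≤ expPay P h (Function.update σ i τ) i :=
  ciInf_le ⟨-C, by rintro _ ⟨_, rfl⟩; exact neg_le_of_abs_le (abs_expPay_le hP hC h _)⟩ σ

lemma neg_le_guarantee (τ : G.Strategy i) (h : G.History) : -C ≤ guarantee P i τ h :=
  le_guarantee fun _ => neg_le_of_abs_le (abs_expPay_le hP hC h _)

lemma maxminVal_le (h : G.History) : maxminVal P i h ≤ C :=
  ciSup_le fun τ => (guarantee_le_expPay hP hC τ h (Classical.arbitrary _)).trans
    (le_of_abs_le (abs_expPay_le hP hC h _))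

end Bounded

section Resets

variable (test : G.History → G.History → Prop)

/-- Walking along a history, the base starts at the initial history and jumps to the current
history whenever `test base current` holds; `lastReset test h` is the base at the end of `h`.
The history is read reversed so that the walk is a structural recursion. -/
noncomputable def lastResetRev (s : G.S) : List (G.ActionProfile × G.S) → G.History
  | [] => (s, [])
  | e :: l => if test (lastResetRev s l) (s, (e :: l).reverse) then (s, (e :: l).reverse)
      else lastResetRev s l

noncomputable def lastReset (h : G.History) : G.History := lastResetRev test h.1 h.2.reverse

def nextResets (h : G.History) : Set G.History :=
  {h' | Ext h h' ∧ h' ≠ h ∧ lastReset test h' = h' ∧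
    ∀ m, Ext h m → m ≠ h → Ext m h' → lastReset test m = m → m = h'}

variable {test}

@[simp] lemma lastReset_initH (s : G.S) : lastReset test (initH G s) = initH G s := rfl

lemma lastReset_snocH (h : G.History) (a : G.ActionProfile) (s : G.S) :
    lastReset test (snocH h a s) =
      if test (lastReset test h) (snocH h a s) then snocH h a s else lastReset test h := by
  simp only [lastReset, snocH, List.reverse_append, List.reverse_singleton, List.singleton_append]
  rw [lastResetRev, List.reverse_cons, List.reverse_reverse]
  congr

lemma lastReset_snocH_of_ne {h : G.History} {a : G.ActionProfile} {s : G.S}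
    (hne : lastReset test (snocH h a s) ≠ snocH h a s) :
    lastReset test (snocH h a s) = lastReset test h := by
  rw [lastReset_snocH] at hne ⊢
  split_ifs at hne ⊢ <;> trivial

lemma ext_lastReset (h : G.History) : Ext (lastReset test h) h := by
  induction h using History.snoc_induction with
  | init s => exact ext_refl _
  | snoc h a s ih =>
    rw [lastReset_snocH]
    split_ifs
    exacts [ext_refl _, ih.trans (ext_snocH h a s)]

lemma lastReset_eq_self_or_not_test (h : G.History) :
    lastReset test h = h ∨ ¬test (lastReset test h) h := by
  induction h using History.snoc_induction with
  | init s => exact .inl rfl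
  | snoc h a s _ =>
    by_cases ht : test (lastReset test h) (snocH h a s)
    · exact .inl (by rw [lastReset_snocH, if_pos ht])
    · exact .inr (by rwa [lastReset_snocH, if_neg ht])

lemma lastReset_catH_of_forall_ne {h : G.History} {l : List (G.ActionProfile × G.S)}
    (hno : ∀ m, Ext h m → m ≠ h → Ext m (catH h l) → lastReset test m ≠ m) :
    lastReset test (catH h l) = lastReset test h := by
  induction l using List.reverseRecOn with
  | nil => rw [catH_nil]
  | append_singleton l e ih =>
    have hext : Ext (catH h l) (catH h (l ++ [e])) := ext_catH_catH h (List.prefix_append l [e])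
    have hne : catH h (l ++ [e]) ≠ h := fun heq => by
      simpa [catH] using congrArg (fun g : G.History => g.2.length) heq
    have hnot_reset := hno _ (ext_catH h _) hne (ext_refl _)
    rw [catH_append_singleton] at hnot_reset ⊢
    rw [lastReset_snocH_of_ne hnot_reset, ih fun m hm hne hml => hno m hm hne (hml.trans hext)]

lemma isAntichain_nextResets (h : G.History) : IsAntichain Ext (nextResets test h) :=
  fun _ ha _ hb hne hab => hne (hb.2.2.2 _ ha.1 ha.2.1 hab ha.2.2.1)

lemma exists_mem_nextResets_ext {h m : G.History} (hm : Ext h m) (hne : m ≠ h)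
    (hreset : lastReset test m = m) : ∃ h' ∈ nextResets test h, Ext h' m := by
  induction hlen : m.2.length using Nat.strong_induction_on generalizing m with
  | _ n ih =>
    by_cases hmin : ∀ m', Ext h m' → m' ≠ h → Ext m' m → lastReset test m' = m' → m' = m
    · exact ⟨m, ⟨hm, hne, hreset, hmin⟩, ext_refl m⟩
    push Not at hmin
    obtain ⟨m', hm', hne', hm'm, hreset', hm'ne⟩ := hmin
    obtain ⟨h', hh', hh'm'⟩ := ih _ (hlen ▸ hm'm.length_lt hm'ne) hm' hne' hreset' rfl
    exact ⟨h', hh', hh'm'.trans hm'm⟩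

lemma lastReset_eq_of_forall_not_ext {h h'' : G.History} (hext : Ext h h'')
    (hno : ∀ h' ∈ nextResets test h, ¬Ext h' h'') : lastReset test h'' = lastReset test h := by
  obtain ⟨l, rfl⟩ := ext_iff_exists_catH.mp hext
  exact lastReset_catH_of_forall_ne fun m hm hne hml hreset =>
    let ⟨h', hh', hh'm⟩ := exists_mem_nextResets_ext hm hne hreset
    hno h' hh' (hh'm.trans hml)

lemma test_lastReset_of_mem_nextResets {h h' : G.History} (hh' : h' ∈ nextResets test h) :
    test (lastReset test h) h' := by
  obtain ⟨hext, hne, hreset, hmin⟩ := hh'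
  obtain ⟨l, rfl⟩ := ext_iff_exists_catH.mp hext
  obtain ⟨l, ⟨a, s⟩, rfl⟩ : ∃ l' e, l = l' ++ [e] := by
    rcases l.eq_nil_or_concat with rfl | ⟨l', e, rfl⟩
    · exact absurd (catH_nil h) hne
    · exact ⟨l', e, List.concat_eq_append⟩
  rw [catH_append_singleton] at hreset hmin ⊢
  have hlast : lastReset test (catH h l) = lastReset test h := by
    refine lastReset_catH_of_forall_ne fun m hm hmh hml hm_reset => ?_
    have hm_eq := hmin m hm hmh (hml.trans (ext_snocH _ a s)) hm_reset
    rw [hm_eq] at hml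
    exact snocH_ne _ a s (hml.antisymm (ext_snocH _ a s))
  rw [← hlast]
  by_contra ht
  rw [lastReset_snocH, if_neg ht] at hreset
  exact snocH_ne _ a s ((hreset ▸ ext_lastReset (catH h l)).antisymm (ext_snocH _ a s))

end Resets

noncomputable def patchProfile (R : Set G.History) (σ : G.Profile) (ρ : G.History → G.Profile) :
    G.Profile :=
  fun j g => if hg : ∃ h' ∈ R, Ext h' g then ρ hg.choose j g else σ j g

lemma patchProfile_of_forall_not_ext {R : Set G.History} {σ : G.Profile}
    {ρ : G.History → G.Profile} {g : G.History} (hg : ∀ h' ∈ R, ¬Ext h' g) (j : G.I) :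
    patchProfile R σ ρ j g = σ j g :=
  dif_neg fun ⟨h', hh', hext⟩ => hg h' hh' hext

lemma patchProfile_of_ext {R : Set G.History} (hR : IsAntichain Ext R) {σ : G.Profile}
    {ρ : G.History → G.Profile} {h' g : G.History} (hh' : h' ∈ R) (hg : Ext h' g) (j : G.I) :
    patchProfile R σ ρ j g = ρ h' j g := by
  have hex : ∃ h' ∈ R, Ext h' g := ⟨h', hh', hg⟩
  obtain ⟨hmem, hext⟩ := hex.choose_spec
  rw [patchProfile, dif_pos hex]
  rcases ext_or_ext_of_ext hext hg with hle | hle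
  · rw [hR.eq hmem hh' hle]
  · rw [hR.eq' hmem hh' hle]

variable (P i) in
def FallsShort (τ : G.History → G.Strategy i) (η : ℝ) (g h' : G.History) : Prop :=
  guarantee P i (τ g) h' < maxminVal P i h' - η

noncomputable def switchingStrategy (test : G.History → G.History → Prop)
    (τ : G.History → G.Strategy i) : G.Strategy i :=
  fun h => τ (lastReset test h) h

variable (hP : IsInducedFamily G P) (hfm : Measurable (G.payoff i))
  (hC : ∀ r, |G.payoff i r| ≤ C) (τ : G.History → G.Strategy i) (η : ℝ)
include hP hfm hC

/-- At the next reset points the opponents can punish the switching strategy only down to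
`maxminVal + β`, whereas the strategy followed at `h` would secure less than `maxminVal - η`. -/
lemma guarantee_add_min_le_expPay_switchingStrategy {β : ℝ}
    (hβ : ∀ g, lastReset (FallsShort P i τ η) g = g →
      maxminVal P i g + β ≤ guarantee P i (switchingStrategy (FallsShort P i τ η) τ) g)
    (h : G.History) (σ : G.Profile) :
    guarantee P i (τ (lastReset (FallsShort P i τ η) h)) h + min 0 (β + η) ≤
      expPay P h (Function.update σ i (switchingStrategy (FallsShort P i τ η) τ)) i := by
  set T := FallsShort P i τ η
  set τ₀ := τ (lastReset T h)
  set R := nextResets T h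
  refine le_of_forall_pos_le_add fun γ hγ => ?_
  choose ρ hρ using fun h' =>
    exists_expPay_lt_of_guarantee_lt (lt_add_of_pos_right (guarantee P i τ₀ h') hγ)
  have hagree (j : G.I) (h'' : G.History) (hh'' : Ext h h'') (hno : ∀ h' ∈ R, ¬Ext h' h'') :
      Function.update σ i (switchingStrategy T τ) j h'' =
        Function.update (patchProfile R σ ρ) i τ₀ j h'' := by
    rcases eq_or_ne j i with rfl | hj
    · simp only [Function.update_self, switchingStrategy, lastReset_eq_of_forall_not_ext hh'' hno,
        τ₀]
    · simp only [Function.update_of_ne hj, patchProfile_of_forall_not_ext hno]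
  have hgain (h' : G.History) (hh' : h' ∈ R) :
      expPay P h' (Function.update (patchProfile R σ ρ) i τ₀) i + (β + η - γ) ≤
        expPay P h' (Function.update σ i (switchingStrategy T τ)) i := by
    have hpunish : expPay P h' (Function.update (patchProfile R σ ρ) i τ₀) i =
        expPay P h' (Function.update (ρ h') i τ₀) i := by
      rw [expPay, expPay, hP.measure_congr fun j g hg => ?_]
      rcases eq_or_ne j i with rfl | hj
      · simp only [Function.update_self]
      · rw [Function.update_of_ne hj, Function.update_of_ne hj]
        exact patchProfile_of_ext (isAntichain_nextResets h) hh' hg j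
    have hshort : guarantee P i τ₀ h' < maxminVal P i h' - η :=
      test_lastReset_of_mem_nextResets hh'
    linarith [hρ h', hβ h' hh'.2.2.1, guarantee_le_expPay hP hC (switchingStrategy T τ) h' σ]
  have hpatch := hP.expPay_add_min_le (isAntichain_nextResets h) hagree hfm hC
    (fun h' hh' => hh'.1) hgain
  have hmin : min 0 (β + η) - γ ≤ min 0 (β + η - γ) :=
    le_min (by linarith [min_le_left 0 (β + η)]) (by linarith [min_le_right 0 (β + η)])
  linarith [guarantee_le_expPay hP hC τ₀ h (patchProfile R σ ρ)]

/-- Otherwise the worst shortfall `β` over reset points would satisfy `β ≥ β + η - δ`. -/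
lemma maxminVal_sub_le_guarantee_switchingStrategy {δ : ℝ} (hδη : δ < η)
    (hτ : ∀ g, maxminVal P i g - δ < guarantee P i (τ g) g) {g : G.History}
    (hg : lastReset (FallsShort P i τ η) g = g) :
    maxminVal P i g - η ≤ guarantee P i (switchingStrategy (FallsShort P i τ η) τ) g := by
  set T := FallsShort P i τ η
  set gap : {g // lastReset T g = g} → ℝ := fun g =>
    guarantee P i (switchingStrategy T τ) g.1 - maxminVal P i g.1
  have : Nonempty {g // lastReset T g = g} :=
    ⟨⟨initH G (Classical.arbitrary _), lastReset_initH _⟩⟩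
  have hbdd : BddBelow (Set.range gap) := ⟨-C - C, by
    rintro _ ⟨g, rfl⟩
    exact sub_le_sub (neg_le_guarantee hP hC _ g.1) (maxminVal_le hP hC g.1)⟩
  have hβ (g : G.History) (hg : lastReset T g = g) :
      maxminVal P i g + iInf gap ≤ guarantee P i (switchingStrategy T τ) g := by
    linarith [ciInf_le hbdd ⟨g, hg⟩]
  have hgap : -δ + min 0 (iInf gap + η) ≤ iInf gap := le_ciInf fun ⟨g, hg⟩ => by
    have := le_guarantee fun σ =>
      guarantee_add_min_le_expPay_switchingStrategy hP hfm hC τ η hβ g σ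
    rw [hg] at this
    linarith [hτ g]
  have hnonneg : 0 ≤ iInf gap + η := by
    by_contra hneg
    rw [min_eq_right (not_le.mp hneg).le] at hgap
    linarith
  linarith [hβ g hg]

end

/-- **Theorem (existence of subgame ε-maxmin strategies).**
In every stochastic game, for every `ε > 0`, every player `i` has a subgame `ε`-maxmin
strategy `σ*_i`: for every history `h` and every strategy profile `σ_{-i}` of the opponents,
`E_{h, σ*_i, σ_{-i}}[f_i] ≥ v̲_i(h) - ε`. -/
theorem exists_subgame_maxmin_strategy (G : StochGame)
    (P : G.History → G.Profile → Measure G.Run) (hP : IsInducedFamily G P)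
    (hfm : ∀ i, Measurable (G.payoff i))
    (hfb : ∀ i, ∃ C : ℝ, ∀ r : G.Run, |G.payoff i r| ≤ C)
    (ε : ℝ) (hε : 0 < ε) (i : G.I) :
    ∃ σstar : G.Strategy i, ∀ h : G.History, Valid h → ∀ σ : G.Profile,
      maxminVal P i h - ε ≤ expPay P h (Function.update σ i σstar) i := by
  obtain ⟨C, hC⟩ := hfb i
  choose τ hτ using fun g => exists_guarantee_gt (P := P) (i := i) g (half_pos hε)
  set T := FallsShort P i τ ε
  refine ⟨switchingStrategy T τ, fun h _ σ => ?_⟩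
  have hreset (g : G.History) (hg : lastReset T g = g) :
      maxminVal P i g + -ε ≤ guarantee P i (switchingStrategy T τ) g := by
    linarith [maxminVal_sub_le_guarantee_switchingStrategy hP (hfm i) hC τ ε (half_lt_self hε)
      hτ hg]
  have hcurrent : maxminVal P i h - ε ≤ guarantee P i (τ (lastReset T h)) h := by
    rcases lastReset_eq_self_or_not_test (test := T) h with hself | hnot_short
    · rw [hself]
      linarith [hτ h]
    · exact not_lt.mp hnot_short
  have := guarantee_add_min_le_expPay_switchingStrategy hP (hfm i) hC τ ε hreset h σ
  rw [neg_add_cancel, min_self, add_zero] at this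
  linarith

end StochGame
end

section
/- Let Q ⊆ H be a set of histories no element of which is a strict extension of another. Fix a player i ∈ I, a strategy profile σ, a stage n ∈ ℕ with n ≥ 2, and a stopping time θ : 𝓡 → ℕ ∪ {∞} adapted to the filtration (𝓕^n)_{n∈ℕ} generated by finite prefixes. For a history h and action a_i ∈ A_i, define Λ_i(h,a_i) := Σ_{a_{-i}∈A_{-i}, s∈S : (h,(a_i,a_{-i}),s)∈Q} σ_{-i}(a_{-i} | h) · p(s | s_h, a_i, a_{-i}); for a run r = (s¹,a¹,s²,a²,…) and ℓ ∈ ℕ ∪ {∞}, define ζ_i(r,n,ℓ) := Σ_{k=n}^{ℓ} Λ_i(r^{k−1}, a_i^k) if n ≤ ℓ and ζ_i(r,n,ℓ) := 0 otherwise, where r^k denotes the prefix of r in stage k. Then E_σ[ζ_i(r,n,θ(r))] = P_σ(r^k ∈ Q for some k ∈ {n, n+1, …, θ(r)}). -/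
open scoped ENNReal NNReal Classical

open MeasureTheory

namespace StochGame

variable {G : StochGame}

/-- The prefix `r^k` of a run `r` in stage `k`: the history `(s¹,a¹,…,s^k)`. -/
def prefixRun (r : G.Run) (k : ℕ) : G.History :=
  (r.1, List.ofFn fun j : Fin (k - 1) => r.2 j)

/-- The σ-algebra `𝓕^n` on runs generated by the cylinder sets of histories in stage `n`,
i.e. by the prefix in stage `n`. -/
def filt (G : StochGame) (n : ℕ) : MeasurableSpace G.Run :=
  MeasurableSpace.comap (fun r : G.Run => prefixRun r n) ⊤

end StochGame

namespace StochGame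

variable {G : StochGame}

/-- `Λ_i(h, a_i)`: the probability that the history in the next stage lies in `Q`, when at
the history `h` player `i` selects the action `a_i` and her opponents play according to
`σ_{-i}(h)`. -/
noncomputable def lam (Q : Set G.History) (σ : G.Profile) (i : G.I) (h : G.History)
    (ai : G.A i) : ℝ≥0∞ :=
  ∑ a : G.ActionProfile, if a i = ai then
      (∏ j ∈ Finset.univ.erase i, σ j h (a j)) *
        ∑' s : G.S, (if snocH h a s ∈ Q then G.trans (lastState h) a s else 0)
    else 0

/-- `ζ_i(r, n, ℓ) = Σ_{k=n}^{ℓ} Λ_i(r^{k-1}, a_i^k)`: the fictitious probability that the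
run `r` could have reached a history in `Q` at one of the stages `n, …, ℓ`, where the
`k`-th term is `Λ_i` evaluated at the prefix of `r` in stage `k-1` together with the action
that player `i` took there (extending `r^{k-1}` to `r^k`). -/
noncomputable def zeta (Q : Set G.History) (σ : G.Profile) (i : G.I) (r : G.Run) (n : ℕ)
    (l : ℕ∞) : ℝ≥0∞ :=
  ∑' k : ℕ, if n ≤ k ∧ (k : ℕ∞) ≤ l then
      lam Q σ i (prefixRun r (k - 1)) ((r.2 (k - 2)).1 i)
    else 0

end StochGame

/-!
Write `ζ_i(r, n, θ r)` as the sum over `k` of `[n ≤ k ≤ θ r] Λ_i(r^{k-1}, a_i)`, where `a_i` is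
the action player `i` takes at `r^{k-1}`. Because `θ` is a stopping time, `{k ≤ θ}` is
determined by `r^{k-1}`; averaging the `k`-th summand over the next transition given `r^{k-1}`
therefore replaces `Λ_i(r^{k-1}, a_i)` by its mean over the mixed action of player `i`, which is
the conditional probability that `r^k ∈ Q`. So the `k`-th summand has expectation
`P(n ≤ k ≤ θ, r^k ∈ Q)`, and since no history of `Q` extends another, these events are disjoint
for distinct `k` and add up to the probability of reaching `Q`.
-/

theorem lintegral_comp_eq_tsum {α β : Type*} [MeasurableSpace α] [MeasurableSpace β] [Countable β]
    [MeasurableSingletonClass β] {φ : α → β} (hφ : Measurable φ) (F : β → ℝ≥0∞)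
    (μ : Measure α) : ∫⁻ a, F (φ a) ∂μ = ∑' b, F b * μ {a | φ a = b} := by
  rw [← lintegral_map (measurable_of_countable F) hφ, lintegral_countable']
  simp_rw [Measure.map_apply hφ (measurableSet_singleton _)]
  rfl

theorem Fintype.sum_pi_ite_apply_eq {ι R : Type*} [Fintype ι] [DecidableEq ι] [CommSemiring R]
    {β : ι → Type*} [∀ j, Fintype (β j)] [∀ j, DecidableEq (β j)] (g : ∀ j, β j → R)
    (hg : ∀ j, ∑ c, g j c = 1) (i : ι) (b : β i) :
    ∑ a : ∀ j, β j, (if a i = b then ∏ j, g j (a j) else 0) = g i b := by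
  set g' := Function.update g i fun c => if c = b then g i c else 0
  have hg' : ∀ j ∈ Finset.univ.erase i, g' j = g j :=
    fun j hj => Function.update_of_ne (Finset.ne_of_mem_erase hj) _ _
  have hprod : ∀ a : ∀ j, β j, (if a i = b then ∏ j, g j (a j) else 0) = ∏ j, g' j (a j) := by
    intro a
    rw [← Finset.mul_prod_erase _ _ (Finset.mem_univ i),
      ← Finset.mul_prod_erase _ (fun j => g' j (a j)) (Finset.mem_univ i),
      Finset.prod_congr rfl fun j hj => congrFun (hg' j hj) (a j)]
    simp [g', ite_mul]
  rw [Finset.sum_congr rfl fun a _ => hprod a, ← Fintype.prod_sum,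
    ← Finset.mul_prod_erase _ _ (Finset.mem_univ i),
    Finset.prod_eq_one fun j hj => by rw [hg' j hj, hg]]
  simp [g']

namespace StochGame

variable {G : StochGame}

instance : MeasurableSpace G.History := ⊤

instance : MeasurableSingletonClass G.History := ⟨fun _ => MeasurableSpace.measurableSet_top⟩

@[simp]
lemma length_prefixRun (r : G.Run) (k : ℕ) : (prefixRun r k).2.length = k - 1 := by
  simp [prefixRun]

lemma prefixRun_of_le {j k : ℕ} (hjk : j ≤ k) (r : G.Run) :
    prefixRun r j = ((prefixRun r k).1, (prefixRun r k).2.take (j - 1)) := by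
  refine Prod.ext rfl (List.ext_getElem (by simp; omega) fun m h₁ h₂ => ?_)
  simp [prefixRun]

lemma prefixRun_add_two (r : G.Run) (m : ℕ) :
    prefixRun r (m + 2) = snocH (prefixRun r (m + 1)) (r.2 m).1 (r.2 m).2 := by
  show (r.1, List.ofFn fun j : Fin (m + 1) => r.2 j)
    = (r.1, (List.ofFn fun j : Fin m => r.2 j) ++ _)
  rw [List.ofFn_succ', List.concat_eq_append]
  rfl

lemma ext_prefixRun_of_le {j k : ℕ} (hjk : j ≤ k) (r : G.Run) :
    Ext (prefixRun r j) (prefixRun r k) := by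
  rw [prefixRun_of_le hjk r]
  exact ⟨rfl, List.take_prefix _ _⟩

lemma measurable_prefixRun (k : ℕ) : Measurable fun r : G.Run => prefixRun r k := by
  have : Measurable fun r : G.Run => (r.1, fun j : Fin (k - 1) => r.2 j) :=
    measurable_fst.prodMk <|
      measurable_pi_lambda _ fun _ => (measurable_pi_apply _).comp measurable_snd
  exact (measurable_of_countable fun x : G.S × (Fin (k - 1) → G.ActionProfile × G.S) =>
    ((x.1, List.ofFn x.2) : G.History)).comp this

lemma filt_mono : Monotone G.filt := fun j k hjk => by
  have : (fun r : G.Run => prefixRun r j) =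
      (fun h : G.History => (h.1, h.2.take (j - 1))) ∘ fun r => prefixRun r k :=
    funext (prefixRun_of_le hjk)
  rw [filt, filt, this, ← MeasurableSpace.comap_comp]
  exact MeasurableSpace.comap_mono le_top

def runFiltration (G : StochGame) : Filtration ℕ (inferInstance : MeasurableSpace G.Run) where
  seq := G.filt
  mono' := filt_mono
  le' k := (measurable_prefixRun k).comap_le

lemma isStoppingTime_runFiltration {θ : G.Run → ℕ∞}
    (hθ : ∀ m : ℕ, MeasurableSet[G.filt m] {r : G.Run | θ r = (m : ℕ∞)}) :
    IsStoppingTime G.runFiltration θ :=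
  isStoppingTime_of_measurableSet_eq hθ

lemma exists_lt_iff_prefixRun_mem {θ : G.Run → ℕ∞} (hθ : IsStoppingTime G.runFiltration θ)
    (m : ℕ) : ∃ T : Set G.History, ∀ r, (m : ℕ∞) < θ r ↔ prefixRun r m ∈ T := by
  obtain ⟨T, -, hT⟩ := MeasurableSpace.measurableSet_comap.mp (hθ.measurableSet_gt m)
  exact ⟨T, fun r => (Set.ext_iff.mp hT r).symm⟩

lemma snocH_inj {h h' : G.History} {a a' : G.ActionProfile} {t t' : G.S} :
    snocH h a t = snocH h' a' t' ↔ h = h' ∧ a = a' ∧ t = t' := by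
  simp [snocH, Prod.ext_iff, and_assoc]

lemma prefixRun_eq_iff_mem_cyl {k : ℕ} {h : G.History} (hk : h.2.length = k - 1) (r : G.Run) :
    prefixRun r k = h ↔ r ∈ cyl h := by
  constructor
  · rintro rfl
    exact ⟨rfl, fun j hj => by simp [prefixRun]⟩
  · rintro ⟨h₁, h₂⟩
    exact Prod.ext h₁ (List.ext_get (by simp [hk]) fun j _ hj => by simpa [prefixRun] using h₂ j hj)

noncomputable def stepProb (σ : G.Profile) (h : G.History) (x : G.ActionProfile × G.S) : ℝ≥0∞ :=
  (∏ j, σ j h (x.1 j)) * G.trans (lastState h) x.1 x.2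

lemma contProb_concat (σ : G.Profile) (h : G.History) (l : List (G.ActionProfile × G.S))
    (x : G.ActionProfile × G.S) :
    contProb σ h (l ++ [x]) = contProb σ h l * stepProb σ (catH h l) x := by
  induction l generalizing h with
  | nil => simp [contProb, stepProb, catH]
  | cons y l ih =>
    simp [contProb, ih, mul_assoc, catH, snocH]

variable {P : G.History → G.Profile → Measure G.Run}

lemma measure_cyl (hP : IsInducedFamily G P) (s : G.S) (σ : G.Profile) (h : G.History) :
    P (G.initH s) σ (cyl h) = if h.1 = s then contProb σ (G.initH s) h.2 else 0 := by
  split_ifs with hs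
  · obtain ⟨t, l⟩ := h
    subst hs
    exact hP.2 _ σ l
  · have : IsProbabilityMeasure (P (G.initH s) σ) := hP.1 _ σ
    have hcyl : cyl (G.initH s) = Prod.fst ⁻¹' {s} := by ext r; simp [cyl, initH]
    have hmeas : MeasurableSet (cyl (G.initH s)) :=
      hcyl ▸ measurable_fst (measurableSet_singleton s)
    have hfull : P (G.initH s) σ (cyl (G.initH s)) = 1 := hP.2 _ σ []
    exact measure_mono_null
      (show cyl h ⊆ (cyl (G.initH s))ᶜ from fun r hr hr' => hs (hr.1.symm.trans hr'.1))
      ((prob_compl_eq_zero_iff hmeas).mpr hfull)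

lemma measure_prefixRun_eq (hP : IsInducedFamily G P) (s : G.S) (σ : G.Profile) (k : ℕ)
    (h : G.History) :
    P (G.initH s) σ {r | prefixRun r k = h}
      = if h.1 = s ∧ h.2.length = k - 1 then contProb σ (G.initH s) h.2 else 0 := by
  by_cases hk : h.2.length = k - 1
  · rw [show {r | prefixRun r k = h} = cyl h from Set.ext (prefixRun_eq_iff_mem_cyl hk),
      measure_cyl hP]
    simp [hk]
  · have : {r | prefixRun r k = h} = ∅ :=
      Set.eq_empty_of_forall_notMem fun r hr => hk (hr ▸ length_prefixRun r k)
    simp [this, hk]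

lemma measure_prefixRun_eq_snocH (hP : IsInducedFamily G P) (s : G.S) (σ : G.Profile) (m : ℕ)
    (h : G.History) (x : G.ActionProfile × G.S) :
    P (G.initH s) σ {r | prefixRun r (m + 2) = snocH h x.1 x.2}
      = P (G.initH s) σ {r | prefixRun r (m + 1) = h} * stepProb σ h x := by
  simp only [measure_prefixRun_eq hP]
  by_cases hh : h.1 = s ∧ h.2.length = m
  · obtain ⟨t, l⟩ := h
    obtain ⟨rfl, hl⟩ := hh
    simp [snocH, hl, contProb_concat, catH, initH]
  · simp [snocH, hh]

lemma lintegral_prefixRun_step (hP : IsInducedFamily G P) (s : G.S) (σ : G.Profile) (m : ℕ)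
    (F : G.History → G.ActionProfile × G.S → ℝ≥0∞) :
    ∫⁻ r, F (prefixRun r (m + 1)) (r.2 m) ∂P (G.initH s) σ
      = ∫⁻ r, ∑' x, stepProb σ (prefixRun r (m + 1)) x * F (prefixRun r (m + 1)) x
          ∂P (G.initH s) σ := by
  have hφ : Measurable fun r : G.Run => (prefixRun r (m + 1), r.2 m) :=
    (measurable_prefixRun _).prodMk ((measurable_pi_apply m).comp measurable_snd)
  have hfib : ∀ (h : G.History) (x : G.ActionProfile × G.S),
      {r : G.Run | (prefixRun r (m + 1), r.2 m) = (h, x)}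
        = {r | prefixRun r (m + 2) = snocH h x.1 x.2} := by
    intro h x
    ext r
    rw [Set.mem_ofPred_eq, Set.mem_ofPred_eq, prefixRun_add_two, snocH_inj, Prod.mk.injEq,
      Prod.ext_iff (x := r.2 m)]
  have hlhs := lintegral_comp_eq_tsum hφ (Function.uncurry F) (P (G.initH s) σ)
  simp only [Function.uncurry_apply_pair] at hlhs
  rw [hlhs, lintegral_comp_eq_tsum (measurable_prefixRun (m + 1))
    (fun h => ∑' x, stepProb σ h x * F h x), ENNReal.tsum_prod']
  refine tsum_congr fun h => ?_
  simp only [Function.uncurry_apply_pair, hfib, measure_prefixRun_eq_snocH hP,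
    ← ENNReal.tsum_mul_right]
  exact tsum_congr fun x => by ring

lemma sum_prod_mul_lam (Q : Set G.History) (σ : G.Profile) (i : G.I) (h : G.History) :
    ∑ a : G.ActionProfile, (∏ j, σ j h (a j)) * lam Q σ i h (a i)
      = ∑ a : G.ActionProfile, (∏ j, σ j h (a j)) *
          ∑' t, if snocH h a t ∈ Q then G.trans (lastState h) a t else 0 := by
  set q : G.ActionProfile → ℝ≥0∞ := fun a =>
    ∑' t, if snocH h a t ∈ Q then G.trans (lastState h) a t else 0
  have hσ : ∀ j, ∑ c, σ j h c = 1 := fun j => by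
    rw [← tsum_fintype (L := SummationFilter.unconditional _), (σ j h).tsum_coe]
  calc ∑ a : G.ActionProfile, (∏ j, σ j h (a j)) * lam Q σ i h (a i)
      = ∑ a : G.ActionProfile, ∑ a' : G.ActionProfile, if a' i = a i then
          (∏ j, σ j h (a j)) * ((∏ j ∈ Finset.univ.erase i, σ j h (a' j)) * q a') else 0 := by
        simp only [lam, Finset.mul_sum, mul_ite, mul_zero, q]
    _ = ∑ a' : G.ActionProfile, (∏ j ∈ Finset.univ.erase i, σ j h (a' j)) * q a' *
          ∑ a : G.ActionProfile, if a i = a' i then ∏ j, σ j h (a j) else 0 := by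
        rw [Finset.sum_comm]
        refine Finset.sum_congr rfl fun a' _ => ?_
        rw [Finset.mul_sum]
        refine Finset.sum_congr rfl fun a _ => ?_
        simp only [@eq_comm _ (a' i), mul_ite, mul_zero]
        exact if_congr Iff.rfl (mul_comm _ _) rfl
    _ = ∑ a : G.ActionProfile, (∏ j, σ j h (a j)) * q a := by
        simp only [Fintype.sum_pi_ite_apply_eq _ hσ]
        refine Finset.sum_congr rfl fun a _ => ?_
        rw [← Finset.mul_prod_erase _ _ (Finset.mem_univ i)]
        ring

lemma tsum_stepProb_mul_lam (Q : Set G.History) (σ : G.Profile) (i : G.I) (h : G.History) :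
    ∑' x, stepProb σ h x * lam Q σ i h (x.1 i)
      = ∑' x, if snocH h x.1 x.2 ∈ Q then stepProb σ h x else 0 := by
  have hleft : ∀ a : G.ActionProfile, ∑' t, stepProb σ h (a, t) * lam Q σ i h (a i)
      = (∏ j, σ j h (a j)) * lam Q σ i h (a i) := fun a => by
    simp only [stepProb, mul_right_comm _ _ (lam Q σ i h (a i)), ENNReal.tsum_mul_left,
      (G.trans (lastState h) a).tsum_coe, mul_one]
  have hright : ∀ a : G.ActionProfile,
      ∑' t, (if snocH h a t ∈ Q then stepProb σ h (a, t) else 0)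
        = (∏ j, σ j h (a j)) * ∑' t, if snocH h a t ∈ Q then G.trans (lastState h) a t else 0 :=
    fun a => by simp only [stepProb, ← mul_ite_zero, ENNReal.tsum_mul_left]
  rw [ENNReal.tsum_prod', ENNReal.tsum_prod', tsum_fintype, tsum_fintype]
  simp only [hleft, hright, sum_prod_mul_lam]

noncomputable def zetaTerm (Q : Set G.History) (σ : G.Profile) (i : G.I) (r : G.Run) (n : ℕ)
    (l : ℕ∞) (k : ℕ) : ℝ≥0∞ :=
  if n ≤ k ∧ (k : ℕ∞) ≤ l then lam Q σ i (prefixRun r (k - 1)) ((r.2 (k - 2)).1 i) else 0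

def reachesAt (Q : Set G.History) (θ : G.Run → ℕ∞) (n k : ℕ) : Set G.Run :=
  {r | n ≤ k ∧ (k : ℕ∞) ≤ θ r ∧ prefixRun r k ∈ Q}

variable {θ : G.Run → ℕ∞}

lemma measurableSet_le_stoppingTime (hθ : IsStoppingTime G.runFiltration θ) (k : ℕ) :
    MeasurableSet {r | (k : ℕ∞) ≤ θ r} :=
  G.runFiltration.le k _ (hθ.measurableSet_ge k)

lemma measurable_zetaTerm (hθ : IsStoppingTime G.runFiltration θ) (Q : Set G.History)
    (σ : G.Profile) (i : G.I) (n k : ℕ) : Measurable fun r => zetaTerm Q σ i r n (θ r) k := by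
  have hlam : Measurable fun r : G.Run => lam Q σ i (prefixRun r (k - 1)) ((r.2 (k - 2)).1 i) :=
    (measurable_of_countable fun p : G.History × G.ActionProfile => lam Q σ i p.1 (p.2 i)).comp
      ((measurable_prefixRun _).prodMk (measurable_fst.comp ((measurable_pi_apply _).comp
        measurable_snd)))
  exact hlam.ite ((MeasurableSet.const (n ≤ k)).inter (measurableSet_le_stoppingTime hθ k))
    measurable_const

lemma measurableSet_reachesAt (hθ : IsStoppingTime G.runFiltration θ) (Q : Set G.History)
    (n k : ℕ) : MeasurableSet (reachesAt Q θ n k) :=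
  (MeasurableSet.const (n ≤ k)).inter
    ((measurableSet_le_stoppingTime hθ k).inter (measurable_prefixRun k trivial))

lemma pairwise_disjoint_reachesAt {Q : Set G.History}
    (hQ : ∀ h ∈ Q, ∀ h' ∈ Q, Ext h h' → h = h') {n : ℕ} (hn : 1 ≤ n) :
    Pairwise (Function.onFun Disjoint (reachesAt Q θ n)) := by
  have key : ∀ {k l : ℕ} (r : G.Run), n ≤ k → k < l → prefixRun r k ∈ Q → prefixRun r l ∈ Q →
      False := fun r hk hkl hrk hrl => by
    have := congrArg (fun h : G.History => h.2.length)
      (hQ _ hrk _ hrl (ext_prefixRun_of_le hkl.le r))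
    simp only [length_prefixRun] at this
    omega
  intro k l hkl
  refine Set.disjoint_left.mpr fun r ⟨hnk, _, hrk⟩ ⟨hnl, _, hrl⟩ => ?_
  rcases hkl.lt_or_gt with h | h
  exacts [key r hnk h hrk hrl, key r hnl h hrl hrk]

lemma lintegral_zetaTerm (hP : IsInducedFamily G P) (hθ : IsStoppingTime G.runFiltration θ)
    (s : G.S) (Q : Set G.History) (i : G.I) (σ : G.Profile) {n : ℕ} (hn : 2 ≤ n) (k : ℕ) :
    ∫⁻ r, zetaTerm Q σ i r n (θ r) k ∂P (G.initH s) σ = P (G.initH s) σ (reachesAt Q θ n k) := by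
  by_cases hk : n ≤ k
  swap
  · simp [zetaTerm, reachesAt, hk]
  obtain ⟨m, rfl⟩ : ∃ m, k = m + 2 := ⟨k - 2, by omega⟩
  obtain ⟨T, hT⟩ := exists_lt_iff_prefixRun_mem hθ (m + 1)
  have hle : ∀ r, (m : ℕ∞) + 2 ≤ θ r ↔ prefixRun r (m + 1) ∈ T := fun r => by
    rw [← hT, Nat.cast_succ, ← ENat.add_one_le_iff (by simp), add_assoc, one_add_one_eq_two]
  set F₁ : G.History → G.ActionProfile × G.S → ℝ≥0∞ := fun h x =>
    if h ∈ T then lam Q σ i h (x.1 i) else 0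
  set F₂ : G.History → G.ActionProfile × G.S → ℝ≥0∞ := fun h x =>
    if h ∈ T ∧ snocH h x.1 x.2 ∈ Q then 1 else 0
  have hF : ∀ h, ∑' x, stepProb σ h x * F₁ h x = ∑' x, stepProb σ h x * F₂ h x := fun h => by
    by_cases hh : h ∈ T
    · simpa [F₁, F₂, hh] using tsum_stepProb_mul_lam Q σ i h
    · simp [F₁, F₂, hh]
  calc ∫⁻ r, zetaTerm Q σ i r n (θ r) (m + 2) ∂P (G.initH s) σ
      = ∫⁻ r, F₁ (prefixRun r (m + 1)) (r.2 m) ∂P (G.initH s) σ :=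
        lintegral_congr fun r => by simp [zetaTerm, F₁, hk, hle]
    _ = ∫⁻ r, F₂ (prefixRun r (m + 1)) (r.2 m) ∂P (G.initH s) σ := by
        simp only [lintegral_prefixRun_step hP, hF]
    _ = P (G.initH s) σ (reachesAt Q θ n (m + 2)) := by
        rw [← lintegral_indicator_one (measurableSet_reachesAt hθ Q n (m + 2))]
        refine lintegral_congr fun r => ?_
        simp [F₂, reachesAt, Set.indicator, hk, hle, prefixRun_add_two]

theorem lintegral_zeta_eq_prob_reach_general (G : StochGame)
    (P : G.History → G.Profile → Measure G.Run) (hP : IsInducedFamily G P)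
    (s : G.S) (Q : Set G.History)
    (hQanti : ∀ h ∈ Q, ∀ h' ∈ Q, Ext h h' → h = h')
    (i : G.I) (σ : G.Profile) (n : ℕ) (hn : 2 ≤ n)
    (θ : G.Run → ℕ∞)
    (hθ : ∀ m : ℕ, MeasurableSet[G.filt m] {r : G.Run | θ r = (m : ℕ∞)}) :
    ∫⁻ r, zeta Q σ i r n (θ r) ∂(P (G.initH s) σ)
      = P (G.initH s) σ
          {r : G.Run | ∃ k : ℕ, n ≤ k ∧ (k : ℕ∞) ≤ θ r ∧ prefixRun r k ∈ Q} := by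
  have hτ := isStoppingTime_runFiltration hθ
  have hreach : {r : G.Run | ∃ k : ℕ, n ≤ k ∧ (k : ℕ∞) ≤ θ r ∧ prefixRun r k ∈ Q}
      = ⋃ k, reachesAt Q θ n k := by
    ext r
    simp [reachesAt]
  calc ∫⁻ r, zeta Q σ i r n (θ r) ∂(P (G.initH s) σ)
      = ∑' k, ∫⁻ r, zetaTerm Q σ i r n (θ r) k ∂(P (G.initH s) σ) :=
        lintegral_tsum fun k => (measurable_zetaTerm hτ Q σ i n k).aemeasurable
    _ = ∑' k, P (G.initH s) σ (reachesAt Q θ n k) :=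
        tsum_congr (lintegral_zetaTerm hP hτ s Q i σ hn)
    _ = _ := by
        rw [hreach, measure_iUnion (pairwise_disjoint_reachesAt hQanti (by omega))
          (measurableSet_reachesAt hτ Q n)]

/-- **Theorem (the expectation of `ζ_i` is the probability of reaching `Q`).**
Let `Q ⊆ H` be a set of histories, none of which is a strict extension of another, let `σ`
be a strategy profile, `n ≥ 2`, and let `θ` be a stopping time adapted to the filtration
`(𝓕^m)_m`. Then `E_σ[ζ_i(r, n, θ(r))]` equals the probability under `σ` that the run
reaches a history in `Q` at one of the stages `n, …, θ(r)`. -/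
theorem lintegral_zeta_eq_prob_reach (G : StochGame)
    (P : G.History → G.Profile → Measure G.Run) (hP : IsInducedFamily G P)
    (s : G.S) (Q : Set G.History) (hQH : ∀ h ∈ Q, Valid h)
    (hQanti : ∀ h ∈ Q, ∀ h' ∈ Q, Ext h h' → h = h')
    (i : G.I) (σ : G.Profile) (n : ℕ) (hn : 2 ≤ n)
    (θ : G.Run → ℕ∞)
    (hθ : ∀ m : ℕ, MeasurableSet[G.filt m] {r : G.Run | θ r = (m : ℕ∞)}) :
    ∫⁻ r, zeta Q σ i r n (θ r) ∂(P (G.initH s) σ)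
      = P (G.initH s) σ
          {r : G.Run | ∃ k : ℕ, n ≤ k ∧ (k : ℕ∞) ≤ θ r ∧ prefixRun r k ∈ Q} :=
  lintegral_zeta_eq_prob_reach_general G P hP s Q hQanti i σ n hn θ hθ

end StochGame
end
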